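/- Every acyclic propositional Horn theory decomposes into a composition of single-rule closures: let P be a theory over A with n ≥ 2 distinct rules and let ℓ : A → ℕ be a level mapping for P (ℓ(head r) > ℓ(a) for every r ∈ P and a ∈ body r). Let r_1, …, r_n enumerate the rules of P so that ℓ(head r_1) ≤ ℓ(head r_2) ≤ … ≤ ℓ(head r_n), and for 1 ≤ i ≤ n set bh_i(P) = body({r_1, …, r_{i−1}}) ∪ head({r_{i+1}, …, r_n}). Then P = cl_{bh_1(P)}({r_1}) ∘ cl_{bh_2(P)}({r_2}) ∘ ⋯ ∘ cl_{bh_n(P)}({r_n}). -/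
import Mathlib


/-- A propositional Horn theory over atoms `A`: a finite set of rules `(head, body)`. -/
abbrev Theory (A : Type*) := Finset (A × Finset A)

variable {A : Type*} [Fintype A] [DecidableEq A]

/-- Heads of a (sub)theory. -/
def heads (S : Theory A) : Finset A := S.image Prod.fst

/-- Body atoms of a (sub)theory. -/
def bodies (S : Theory A) : Finset A := S.biUnion Prod.snd

/-- Sequential composition of propositional Horn theories. -/
def comp (P R : Theory A) : Theory A :=
  P.biUnion fun r =>
    (R.powerset.filter fun S => S.card = r.2.card ∧ heads S = r.2).image
      fun S => (r.1, bodies S)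

/-- The unit theory `1_A = {a ← a | a ∈ A}`. -/
def unitTheory (A : Type*) [Fintype A] [DecidableEq A] : Theory A :=
  Finset.univ.image fun a => (a, ({a} : Finset A))

/-- The theory associated with an interpretation `I ⊆ A`. -/
def interp (I : Finset A) : Theory A := I.image fun a => (a, (∅ : Finset A))

/-- The van Emden–Kowalski operator. -/
def vek (P : Theory A) (I : Finset A) : Finset A :=
  (P.filter fun r => r.2 ⊆ I).image Prod.fst

/-- The facts (rules with empty body) of a theory. -/
def facts (P : Theory A) : Theory A := P.filter fun r => r.2 = ∅

/-- The proper rules (rules with nonempty body) of a theory. -/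
def proper (P : Theory A) : Theory A := P.filter fun r => r.2 ≠ ∅

/-- The left reduct `^I P`. -/
def leftReduct (I : Finset A) (P : Theory A) : Theory A := P.filter fun r => r.1 ∈ I

/-- The right reduct `P^I`. -/
def rightReduct (P : Theory A) (I : Finset A) : Theory A := P.filter fun r => r.2 ⊆ I

/-- The restricted unit theory `1^I = {a ← a | a ∈ I}`. -/
def unitOn (I : Finset A) : Theory A := I.image fun a => (a, ({a} : Finset A))

/-- The closure `cl_B(P) = {b ← b | b ∈ B} ∪ P`. -/
def cl (B : Finset A) (P : Theory A) : Theory A :=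
  (B.image fun b => (b, ({b} : Finset A))) ∪ P

/-- The sequential product of a nonempty list of theories (the empty product
is irrelevant here since the list has at least two elements). -/
def compProd : List (Theory A) → Theory A
  | [] => ∅
  | [Q] => Q
  | Q :: Q' :: rest => comp Q (compProd (Q' :: rest))

/-- `bh_i(P) = body({r_1, …, r_{i-1}}) ∪ head({r_{i+1}, …, r_n})` for a linearly
ordered enumeration `r` of the rules of `P`. -/
def bh {n : ℕ} (r : Fin n → A × Finset A) (i : Fin n) : Finset A :=
  bodies ((Finset.univ.filter fun j => j < i).image r) ∪
    heads ((Finset.univ.filter fun j => i < j).image r)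

set_option linter.unusedSectionVars false

lemma mem_comp {P R : Theory A} {x : A × Finset A} :
    x ∈ comp P R ↔ ∃ p ∈ P, ∃ S, S ⊆ R ∧ S.card = p.2.card ∧ heads S = p.2 ∧
      x = (p.1, bodies S) := by
  simp only [comp, Finset.mem_biUnion, Finset.mem_image, Finset.mem_filter,
    Finset.mem_powerset]
  constructor
  · rintro ⟨p, hp, S, ⟨hS, h1, h2⟩, rfl⟩
    exact ⟨p, hp, S, hS, h1, h2, rfl⟩
  · rintro ⟨p, hp, S, hS, h1, h2, rfl⟩
    exact ⟨p, hp, S, ⟨hS, h1, h2⟩, rfl⟩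

lemma mem_cl {B : Finset A} {P : Theory A} {x : A × Finset A} :
    x ∈ cl B P ↔ (∃ b ∈ B, x = (b, ({b} : Finset A))) ∨ x ∈ P := by
  simp [cl, eq_comm]

lemma compProd_cons (Q : Theory A) (l : List (Theory A)) (h : l ≠ []) :
    compProd (Q :: l) = comp Q (compProd l) := by
  cases l with
  | nil => simp at h
  | cons a t => rfl

lemma mem_bh {n : ℕ} {r : Fin n → A × Finset A} {i : Fin n} {a : A} :
    a ∈ bh r i ↔ (∃ j, j < i ∧ a ∈ (r j).2) ∨ (∃ j, i < j ∧ (r j).1 = a) := by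
  simp only [bh, bodies, heads, Finset.mem_union, Finset.mem_biUnion,
    Finset.mem_image, Finset.mem_filter, Finset.mem_univ, true_and]
  constructor
  · rintro (⟨p, ⟨j, hj, rfl⟩, ha⟩ | ⟨p, ⟨j, hj, rfl⟩, ha⟩)
    · exact Or.inl ⟨j, hj, ha⟩
    · exact Or.inr ⟨j, hj, ha⟩
  · rintro (⟨j, hj, ha⟩ | ⟨j, hj, ha⟩)
    · exact Or.inl ⟨r j, ⟨j, hj, rfl⟩, ha⟩
    · exact Or.inr ⟨r j, ⟨j, hj, rfl⟩, ha⟩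

lemma bodies_unit (s : Finset A) :
    ((s.image fun a => (a, ({a} : Finset A))).biUnion Prod.snd) = s := by
  ext a; simp

lemma heads_unit (s : Finset A) :
    (s.image fun a => (a, ({a} : Finset A))).image Prod.fst = s := by
  ext a; simp

lemma comp_cl_single (B : Finset A) (r0 : A × Finset A) (T : Theory A)
    (hT : ∀ a ∈ r0.2, (a, ({a} : Finset A)) ∈ T)
    (hTuniq : ∀ s ∈ T, s.1 ∈ r0.2 → s = (s.1, ({s.1} : Finset A))) :
    comp (cl B ({r0} : Theory A)) T = T.filter (fun s => s.1 ∈ B) ∪ {r0} := by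
  ext x
  rw [mem_comp]
  simp only [Finset.mem_union, Finset.mem_filter, Finset.mem_singleton]
  constructor
  · rintro ⟨p, hp, S, hS, hcard, hheads, rfl⟩
    rw [mem_cl, Finset.mem_singleton] at hp
    rcases hp with ⟨b, hb, rfl⟩ | rfl
    · -- p = (b, {b})
      simp only at hcard hheads ⊢
      rw [Finset.card_singleton] at hcard
      obtain ⟨s, rfl⟩ := Finset.card_eq_one.mp hcard
      have hs : s ∈ T := hS (Finset.mem_singleton_self s)
      have : heads ({s} : Theory A) = {s.1} := by simp [heads]
      rw [this] at hheads
      have hsb : s.1 = b := by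
        have := Finset.mem_singleton.mp (hheads ▸ Finset.mem_singleton_self s.1)
        exact this
      left
      have : bodies ({s} : Theory A) = s.2 := by simp [bodies]
      rw [this, ← hsb]
      exact ⟨hs, hsb ▸ hb⟩
    · -- p = r0
      right
      have hSeq : S = p.2.image fun a => (a, ({a} : Finset A)) := by
        apply Finset.eq_of_subset_of_card_le
        · intro s hs
          have h1 : s.1 ∈ p.2 := by
            rw [← hheads]; exact Finset.mem_image_of_mem Prod.fst hs
          rw [Finset.mem_image]
          exact ⟨s.1, h1, (hTuniq s (hS hs) h1).symm⟩
        · rw [Finset.card_image_of_injective _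
            (fun a b (h : (a, ({a} : Finset A)) = (b, ({b} : Finset A))) =>
              ((Prod.mk.injEq _ _ _ _).mp h).1)]
          omega
      have hb : bodies S = p.2 := by
        rw [hSeq]; exact bodies_unit _
      rw [hb]
  · rintro (⟨hxT, hxB⟩ | rfl)
    · refine ⟨(x.1, {x.1}), ?_, {x}, ?_, ?_, ?_, ?_⟩
      · rw [mem_cl]; exact Or.inl ⟨x.1, hxB, rfl⟩
      · simpa using hxT
      · simp
      · simp [heads]
      · simp [bodies]
    · refine ⟨x, ?_, x.2.image fun a => (a, ({a} : Finset A)), ?_, ?_, ?_, ?_⟩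
      · rw [mem_cl]; simp
      · intro s hs
        rw [Finset.mem_image] at hs
        obtain ⟨a, ha, rfl⟩ := hs
        exact hT a ha
      · rw [Finset.card_image_of_injective _
          (fun a b (h : (a, ({a} : Finset A)) = (b, ({b} : Finset A))) =>
            ((Prod.mk.injEq _ _ _ _).mp h).1)]
      · exact heads_unit _
      · rw [show bodies (x.2.image fun a => (a, ({a} : Finset A))) = x.2
          from bodies_unit _]

lemma aux (ℓ : A → ℕ) : ∀ (n : ℕ) (C : Finset A) (r : Fin (n+1) → A × Finset A),
    (∀ i, ∀ a ∈ (r i).2, ℓ a < ℓ (r i).1) →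
    (∀ i j, i ≤ j → ℓ (r i).1 ≤ ℓ (r j).1) →
    compProd (List.ofFn fun i => cl (C ∪ bh r i) ({r i} : Theory A)) =
      cl C (Finset.univ.image r) := by
  intro n
  induction n with
  | zero =>
    intro C r _ _
    have h0 : bh r (0 : Fin 1) = ∅ := by
      rw [Finset.eq_empty_iff_forall_notMem]
      intro a ha
      rw [mem_bh] at ha
      rcases ha with ⟨j, hj, -⟩ | ⟨j, hj, -⟩ <;>
        · rw [Fin.fin_one_eq_zero j] at hj
          exact absurd hj (lt_irrefl _)
    have h1 : (Finset.univ : Finset (Fin 1)).image r = {r 0} := by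
      simp [Finset.univ_unique]
    rw [h1]
    simp only [List.ofFn_succ, List.ofFn_zero, h0, Finset.union_empty]
    rfl
  | succ n ih =>
    intro C r hlevel hmono
    set r' : Fin (n+1) → A × Finset A := fun j => r j.succ with hr'
    have hbh : ∀ j : Fin (n+1), C ∪ bh r j.succ = (C ∪ (r 0).2) ∪ bh r' j := by
      intro j
      ext a
      simp only [Finset.mem_union, mem_bh]
      constructor
      · rintro (hC | ⟨k, hk, ha⟩ | ⟨k, hk, ha⟩)
        · exact Or.inl (Or.inl hC)
        · rcases Fin.eq_zero_or_eq_succ k with rfl | ⟨k', rfl⟩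
          · exact Or.inl (Or.inr ha)
          · exact Or.inr (Or.inl ⟨k', Fin.succ_lt_succ_iff.mp hk, ha⟩)
        · rcases Fin.eq_zero_or_eq_succ k with rfl | ⟨k', rfl⟩
          · exact absurd hk (Fin.not_lt_zero _)
          · exact Or.inr (Or.inr ⟨k', Fin.succ_lt_succ_iff.mp hk, ha⟩)
      · rintro ((hC | hb) | ⟨k, hk, ha⟩ | ⟨k, hk, ha⟩)
        · exact Or.inl hC
        · exact Or.inr (Or.inl ⟨0, Fin.succ_pos j, hb⟩)
        · exact Or.inr (Or.inl ⟨k.succ, Fin.succ_lt_succ_iff.mpr hk, ha⟩)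
        · exact Or.inr (Or.inr ⟨k.succ, Fin.succ_lt_succ_iff.mpr hk, ha⟩)
    rw [List.ofFn_succ]
    rw [compProd_cons _ _ (by rw [List.ofFn_succ]; exact List.cons_ne_nil _ _)]
    have htail : (List.ofFn fun j : Fin (n+1) =>
        cl (C ∪ bh r (Fin.succ j)) ({r (Fin.succ j)} : Theory A)) =
        List.ofFn fun j : Fin (n+1) => cl ((C ∪ (r 0).2) ∪ bh r' j) ({r' j} : Theory A) := by
      congr 1
      funext j
      rw [hbh j, hr']
    rw [htail, ih (C ∪ (r 0).2) r' (fun i a ha => hlevel i.succ a ha)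
      (fun i j hij => hmono i.succ j.succ (Fin.succ_le_succ_iff.mpr hij))]
    rw [comp_cl_single]
    · ext x
      simp only [Finset.mem_union, Finset.mem_filter, Finset.mem_singleton, mem_cl,
        Finset.mem_image, Finset.mem_univ, true_and]
      constructor
      · rintro (⟨(⟨b, hb, rfl⟩ | ⟨k, rfl⟩), hxB⟩ | rfl)
        · rcases hxB with hC | hbh0
          · exact Or.inl ⟨b, hC, rfl⟩
          · rw [mem_bh] at hbh0
            rcases hbh0 with ⟨j, hj, -⟩ | ⟨j, hj0, hj1⟩
            · exact absurd hj (Fin.not_lt_zero _)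
            · rcases hb with hC | hbody
              · exact Or.inl ⟨b, hC, rfl⟩
              · have h1 : ℓ ((b, ({b} : Finset A)).1) < ℓ (r 0).1 := hlevel 0 b hbody
                have h2 := hmono 0 j (Fin.zero_le _)
                rw [hj1] at h2
                omega
        · exact Or.inr ⟨k.succ, rfl⟩
        · exact Or.inr ⟨0, rfl⟩
      · rintro (⟨b, hb, rfl⟩ | ⟨k, rfl⟩)
        · exact Or.inl ⟨Or.inl ⟨b, Or.inl hb, rfl⟩, Or.inl hb⟩
        · rcases Fin.eq_zero_or_eq_succ k with rfl | ⟨k', rfl⟩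
          · exact Or.inr rfl
          · refine Or.inl ⟨Or.inr ⟨k', rfl⟩, Or.inr ?_⟩
            rw [mem_bh]
            exact Or.inr ⟨k'.succ, Fin.succ_pos k', rfl⟩
    · intro a ha
      rw [mem_cl]
      exact Or.inl ⟨a, Finset.mem_union_right _ ha, rfl⟩
    · intro s hs hs1
      rcases mem_cl.mp hs with ⟨b, _, rfl⟩ | hsP
      · rfl
      · rw [Finset.mem_image] at hsP
        obtain ⟨k, -, rfl⟩ := hsP
        have h1 : ℓ (r k.succ).1 < ℓ (r 0).1 := hlevel 0 _ hs1
        have h2 := hmono 0 k.succ (Fin.zero_le _)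
        omega

/-- Every acyclic propositional Horn theory with at least two rules decomposes
into the sequential product of the closures of its single rules, enumerated in
an order compatible with a level mapping. -/
theorem acyclic_decomposition (P : Theory A) (n : ℕ) (hn : 2 ≤ n)
    (ℓ : A → ℕ) (hlevel : ∀ r ∈ P, ∀ a ∈ r.2, ℓ a < ℓ r.1)
    (r : Fin n → A × Finset A) (hinj : Function.Injective r)
    (himg : P = Finset.univ.image r)
    (hmono : ∀ i j : Fin n, i ≤ j → ℓ (r i).1 ≤ ℓ (r j).1) :
    P = compProd (List.ofFn fun i => cl (bh r i) ({r i} : Theory A)) := by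
  obtain ⟨m, rfl⟩ : ∃ m, n = m + 1 := ⟨n - 1, by omega⟩
  have hlev : ∀ i, ∀ a ∈ (r i).2, ℓ a < ℓ (r i).1 := fun i a ha =>
    hlevel (r i) (himg ▸ Finset.mem_image_of_mem r (Finset.mem_univ i)) a ha
  have h := aux ℓ m ∅ r hlev hmono
  simp only [Finset.empty_union, cl, Finset.image_empty] at h
  rw [himg]
  exact h.symm
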